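/- Let q₀ ∈ (1,2) be the unique real number with Γ((q₀+1)/2) = √π/2. Then for 1 ≤ q < q₀ one has 2^{1/2 - 1/q} ≤ √2 (Γ((1+q)/2)/√π)^{1/q}, with equality at q = q₀; i.e., the two formulas for the optimal real Khinchin constant A_q agree at q₀ and the piecewise definition is the minimum of the two expressions on [1,2]. -/

import Mathlib

/-!
At `q₀` we have `Γ((1 + q₀)/2)/√π = 1/2`, and `√2 · (1/2)^{1/q} = 2^{1/2 - 1/q}`, which gives the
equality. For the inequality it suffices that `Γ((1 + q)/2) ≥ √π/2` when `1 ≤ q < q₀`. Since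
`Γ(3/2) = √π/2` as well and `(1 + q₀)/2 < 3/2`, this follows from the convexity of `Γ` on
`(0, ∞)`: a convex function that takes the same value at two points is at least that value to
the left of both.
-/

open Real Set

lemma Real.Gamma_three_halves : Gamma (3 / 2) = √π / 2 := by
  convert Gamma_nat_add_one_add_half 0 using 1 <;> norm_num

lemma Real.sqrt_pi_div_two_le_Gamma {x y : ℝ} (hx : 0 < x) (hxy : x ≤ y) (hy : y < 3 / 2)
    (hΓy : Gamma y = √π / 2) : √π / 2 ≤ Gamma x :=
  hΓy ▸ convexOn_Gamma.le_left_of_right_le'' hx (by norm_num : (3 / 2 : ℝ) ∈ Ioi 0) hxy hy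
    (by rw [Gamma_three_halves, hΓy])

lemma Real.two_rpow_half_sub (p : ℝ) : (2 : ℝ) ^ (1 / 2 - p) = √2 * (1 / 2) ^ p := by
  rw [div_rpow zero_le_one zero_le_two, one_rpow, rpow_sub two_pos, sqrt_eq_rpow]
  ring

theorem stmt7 (q₀ : ℝ) (hq₀ : q₀ ∈ Set.Ioo (1:ℝ) 2)
    (hΓ : Real.Gamma ((q₀ + 1) / 2) = Real.sqrt Real.pi / 2) :
    (∀ q : ℝ, 1 ≤ q → q < q₀ →
        (2:ℝ) ^ (1/2 - 1/q) ≤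
          Real.sqrt 2 * (Real.Gamma ((1 + q) / 2) / Real.sqrt Real.pi) ^ (1/q)) ∧
    (2:ℝ) ^ (1/2 - 1/q₀) =
      Real.sqrt 2 * (Real.Gamma ((1 + q₀) / 2) / Real.sqrt Real.pi) ^ (1/q₀) := by
  have hπ : 0 < √π := sqrt_pos.mpr pi_pos
  refine ⟨fun q hq hqq₀ => ?_, ?_⟩
  · have hΓq : √π / 2 ≤ Gamma ((1 + q) / 2) :=
      sqrt_pi_div_two_le_Gamma (by linarith) (by linarith) (by linarith [hq₀.2]) hΓ
    have hhalf : 1 / 2 ≤ Gamma ((1 + q) / 2) / √π := by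
      rw [le_div_iff₀ hπ]
      linarith
    rw [two_rpow_half_sub]
    gcongr √2 * ?_ ^ _
  · rw [add_comm 1 q₀, hΓ, two_rpow_half_sub, div_right_comm, div_self hπ.ne']
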